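/- For n ∈ ℕ and 0 ≤ k ≤ n−1, the norms ‖·‖'_{Han_k} and ‖·‖_{Z⊙P_{d,k}⊙P_{d,n-k-1}} on P_{d,n} are dual to each other with respect to the Cauchy pairing; in particular ‖q‖'_{Han_k} = sup{|⟨h,q⟩₂| : h ∈ P_{d,n}, ‖h‖_{Z⊙P_{d,k}⊙P_{d,n-k-1}} ≤ 1} for all q ∈ P_{d,n}. -/

import Mathlib

/-!
Expanding `h = ∑ᵢ zᵢ ∑ⱼ fᵢⱼ gᵢⱼ` and rescaling each `fᵢⱼ`, `gᵢⱼ` to unit norm bounds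
`|⟨h, q⟩₂| ≤ ‖q‖'_{Han_k} ‖h‖_{Z⊙P_{d,k}⊙P_{d,n-k-1}}`. Conversely, each value
`|⟨q, zᵢ f̂ g⟩₂|` defining `‖q‖'_{Han_k}` is `|⟨h, q⟩₂|` for `h = zᵢ f̂ g`, whose weak product norm
is at most `‖f‖₂ ‖g‖₂ ≤ 1`; this gives the first formula. For the second, Hahn–Banach gives a
functional that attains `‖h‖_{Z⊙P_{d,k}⊙P_{d,n-k-1}}` at `h` and is bounded by that norm; on the
finite-dimensional space `P_{d,n}` it is `⟨·, q⟩₂` for some `q`, and `‖q‖'_{Han_k} ≤ 1` by the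
first formula.
-/

noncomputable section
open scoped ComplexOrder
namespace WP

abbrev MvP (d : ℕ) := MvPolynomial (Fin d) ℂ

/-- The Cauchy pairing `⟨p,q⟩₂ = ∑_α a_α conj(b_α)` of coefficient vectors. -/
def pairing {d : ℕ} (p q : MvP d) : ℂ :=
  ∑ α ∈ p.support, p.coeff α * (starRingEnd ℂ) (q.coeff α)

/-- The Hardy norm `‖p‖₂`: the `ℓ²` norm of the coefficient vector. -/
def norm2 {d : ℕ} (p : MvP d) : ℝ :=
  Real.sqrt (∑ α ∈ p.support, ‖p.coeff α‖ ^ 2)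

/-- The weak product norm `‖p‖_{P_{d,k} ⊙ P_{d,l}}`. -/
def wpNorm (d k l : ℕ) (p : MvP d) : ℝ :=
  sInf {x : ℝ | ∃ (m : ℕ) (f g : Fin m → MvP d),
    (∀ j, (f j).IsHomogeneous k) ∧ (∀ j, (g j).IsHomogeneous l) ∧
    p = ∑ j, f j * g j ∧ x = ∑ j, norm2 (f j) * norm2 (g j)}

/-- The weak product norm `‖p‖_{Z_d ⊙ P_{d,k} ⊙ P_{d,l}}`. -/
def zwpNorm (d k l : ℕ) (p : MvP d) : ℝ :=
  sInf {x : ℝ | ∃ f : Fin d → MvP d,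
    (∀ i, (f i).IsHomogeneous (k + l)) ∧
    p = ∑ i, MvPolynomial.X i * f i ∧ x = ∑ i, wpNorm d k l (f i)}

/-- `|||p|||₁ = max_{0 ≤ k ≤ n} ‖p‖_{P_{d,k} ⊙ P_{d,n-k}}`. -/
def triple1 (d n : ℕ) (p : MvP d) : ℝ :=
  ⨆ k : Fin (n + 1), wpNorm d k (n - k) p

/-- `|||p|||₂ = max_{0 ≤ k ≤ n-1} ‖p‖_{Z_d ⊙ P_{d,k} ⊙ P_{d,n-k-1}}`. -/
def triple2 (d n : ℕ) (p : MvP d) : ℝ :=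
  ⨆ k : Fin n, zwpNorm d k (n - 1 - k) p

/-- `f̂`: the polynomial whose coefficients are the conjugates of those of `f`. -/
def hatp {d : ℕ} (f : MvP d) : MvP d := MvPolynomial.map (starRingEnd ℂ) f

/-- The Hankel norm `‖q‖'_{Han_k} = max_{1 ≤ i ≤ d} ‖Γ_q M_{z_i}|_{P_{d,k}}‖` for
`q ∈ P_{d,n}`, computed via `⟨Γ_q (z_i f), g⟩₂ = ⟨q, z_i f̂ g⟩₂`. -/
def hanNorm' (d n k : ℕ) (q : MvP d) : ℝ :=
  sSup {x : ℝ | ∃ (i : Fin d) (f g : MvP d), f.IsHomogeneous k ∧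
    g.IsHomogeneous (n - k - 1) ∧ norm2 f ≤ 1 ∧ norm2 g ≤ 1 ∧
    x = ‖pairing q (MvPolynomial.X i * hatp f * g)‖}

end WP

lemma le_mul_csInf_of_forall_le {A : Set ℝ} {c t : ℝ} (hA : A.Nonempty) (ht : 0 ≤ t)
    (H : ∀ a ∈ A, c ≤ t * a) : c ≤ t * sInf A := by
  rw [← smul_eq_mul, ← Real.sInf_smul_of_nonneg ht]
  exact le_csInf hA.smul_set (by rintro _ ⟨a, ha, rfl⟩; exact H a ha)

lemma le_csInf_add_csInf {A B : Set ℝ} {c : ℝ} (hA : A.Nonempty) (hB : B.Nonempty)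
    (H : ∀ a ∈ A, ∀ b ∈ B, c ≤ a + b) : c ≤ sInf A + sInf B := by
  have hB' : ∀ a ∈ A, c - a ≤ sInf B := fun a ha ↦ le_csInf hB fun b hb ↦ by
    linarith [H a ha b hb]
  have hA' : c - sInf B ≤ sInf A := le_csInf hA fun a ha ↦ by linarith [hB' a ha]
  linarith

theorem Seminorm.exists_dual_eq_le {𝕜 E : Type*} [RCLike 𝕜] [AddCommGroup E] [Module 𝕜 E]
    (N : Seminorm 𝕜 E) (x : E) : ∃ φ : Module.Dual 𝕜 E, φ x = N x ∧ ∀ y, ‖φ y‖ ≤ N y := by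
  let : SeminormedAddCommGroup E := N.toAddGroupSeminorm.toSeminormedAddCommGroup
  let : NormedSpace 𝕜 E := ⟨fun c y ↦ (map_smul_eq_mul N c y).le⟩
  obtain ⟨g, hg, hgx⟩ := exists_dual_vector'' 𝕜 x
  exact ⟨g.toLinearMap, hgx, fun y ↦
    (g.le_opNorm y).trans (mul_le_of_le_one_left (norm_nonneg y) hg)⟩

theorem MvPolynomial.homogeneousSubmodule_add {σ R : Type*} [CommSemiring R] (m n : ℕ) :
    homogeneousSubmodule σ R (m + n) =
      homogeneousSubmodule σ R m * homogeneousSubmodule σ R n := by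
  rw [← homogeneousSubmodule_one_pow, pow_add, homogeneousSubmodule_one_pow,
    homogeneousSubmodule_one_pow]

theorem MvPolynomial.IsHomogeneous.smul {σ R : Type*} [CommSemiring R] {φ : MvPolynomial σ R}
    {n : ℕ} (hφ : φ.IsHomogeneous n) (r : R) : (r • φ).IsHomogeneous n :=
  (homogeneousSubmodule σ R n).smul_mem r hφ

namespace WP

open MvPolynomial ComplexConjugate

section

variable {d : ℕ}

lemma pairing_eq_sum_of_support_subset {p q : MvP d} {s : Finset (Fin d →₀ ℕ)}
    (hs : p.support ⊆ s) : pairing p q = ∑ α ∈ s, p.coeff α * conj (q.coeff α) :=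
  Finset.sum_subset hs fun α _ hα ↦ by rw [notMem_support_iff.mp hα, zero_mul]

@[simp] lemma pairing_zero_left (q : MvP d) : pairing 0 q = 0 := by simp [pairing]

lemma norm_pairing_comm (p q : MvP d) : ‖pairing p q‖ = ‖pairing q p‖ := by
  rw [pairing_eq_sum_of_support_subset (Finset.subset_union_left (s₂ := q.support)),
    pairing_eq_sum_of_support_subset (Finset.subset_union_right (s₁ := p.support)),
    ← RCLike.norm_conj, map_sum]
  simp_rw [map_mul, Complex.conj_conj, mul_comm]

lemma pairing_add_left (p₁ p₂ q : MvP d) :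
    pairing (p₁ + p₂) q = pairing p₁ q + pairing p₂ q := by
  classical
  rw [pairing_eq_sum_of_support_subset support_add,
    pairing_eq_sum_of_support_subset Finset.subset_union_left,
    pairing_eq_sum_of_support_subset Finset.subset_union_right, ← Finset.sum_add_distrib]
  simp_rw [coeff_add, add_mul]

lemma pairing_sum_left {ι : Type*} (s : Finset ι) (w : ι → MvP d) (q : MvP d) :
    pairing (∑ j ∈ s, w j) q = ∑ j ∈ s, pairing (w j) q :=
  map_sum (AddMonoidHom.mk' (pairing · q) fun p₁ p₂ ↦ pairing_add_left p₁ p₂ q) w s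

lemma pairing_smul_left (c : ℂ) (p q : MvP d) : pairing (c • p) q = c * pairing p q := by
  rw [pairing_eq_sum_of_support_subset (support_smul (a := c)), pairing, Finset.mul_sum]
  simp_rw [coeff_smul, smul_eq_mul, mul_assoc]

lemma norm_pairing_le (p q : MvP d) :
    ‖pairing p q‖ ≤ ∑ α ∈ p.support, ‖p.coeff α‖ * ‖q.coeff α‖ :=
  (norm_sum_le _ _).trans_eq <| by simp_rw [norm_mul, RCLike.norm_conj]

lemma norm2_nonneg (p : MvP d) : 0 ≤ norm2 p := Real.sqrt_nonneg _

@[simp] lemma norm2_zero : norm2 (0 : MvP d) = 0 := by simp [norm2]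

lemma norm_coeff_le_norm2 (p : MvP d) (α : Fin d →₀ ℕ) : ‖p.coeff α‖ ≤ norm2 p := by
  by_cases hα : α ∈ p.support
  · exact Real.le_sqrt_of_sq_le <|
      Finset.single_le_sum (f := fun β ↦ ‖p.coeff β‖ ^ 2) (fun _ _ ↦ sq_nonneg _) hα
  · simpa [notMem_support_iff.mp hα] using norm2_nonneg p

lemma norm2_pos {p : MvP d} (hp : p ≠ 0) : 0 < norm2 p := by
  obtain ⟨α, hα⟩ := ne_zero_iff.mp hp
  exact (norm_pos_iff.mpr hα).trans_le (norm_coeff_le_norm2 p α)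

lemma norm2_smul (c : ℂ) (p : MvP d) : norm2 (c • p) = ‖c‖ * norm2 p := by
  rw [norm2, norm2, ← Real.sqrt_sq (norm_nonneg c), ← Real.sqrt_mul (sq_nonneg _), Finset.mul_sum,
    Finset.sum_subset (support_smul (a := c)) fun α _ hα ↦ by simp [notMem_support_iff.mp hα]]
  simp_rw [coeff_smul, smul_eq_mul, norm_mul, mul_pow]

lemma exists_norm2_eq_one {p : MvP d} (hp : p ≠ 0) :
    ∃ c : ℂ, norm2 (c • p) = 1 ∧ p = (norm2 p : ℂ) • c • p := by
  have hpos := norm2_pos hp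
  refine ⟨(norm2 p : ℂ)⁻¹, ?_, ?_⟩
  · rw [norm2_smul, norm_inv, Complex.norm_real, Real.norm_of_nonneg hpos.le,
      inv_mul_cancel₀ hpos.ne']
  · rw [smul_smul, mul_inv_cancel₀ (by exact_mod_cast hpos.ne'), one_smul]

@[simp] lemma coeff_hatp (f : MvP d) (α : Fin d →₀ ℕ) : (hatp f).coeff α = conj (f.coeff α) :=
  coeff_map _ _ _

@[simp] lemma hatp_hatp (f : MvP d) : hatp (hatp f) = f := by ext; simp

lemma hatp_smul (c : ℂ) (f : MvP d) : hatp (c • f) = conj c • hatp f := by ext; simp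

lemma norm2_hatp (f : MvP d) : norm2 (hatp f) = norm2 f := by
  have hsupp : (hatp f).support = f.support := by ext; simp
  simp [norm2, hsupp]

protected lemma _root_.MvPolynomial.IsHomogeneous.hatp {f : MvP d} {n : ℕ}
    (hf : f.IsHomogeneous n) : (hatp f).IsHomogeneous n :=
  hf.map _

section WeakProduct

variable {k l : ℕ}

def wpSet (d k l : ℕ) (p : MvP d) : Set ℝ :=
  {x : ℝ | ∃ (m : ℕ) (f g : Fin m → MvP d),
    (∀ j, (f j).IsHomogeneous k) ∧ (∀ j, (g j).IsHomogeneous l) ∧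
    p = ∑ j, f j * g j ∧ x = ∑ j, norm2 (f j) * norm2 (g j)}

lemma nonneg_of_mem_wpSet {p : MvP d} {x : ℝ} (hx : x ∈ wpSet d k l p) : 0 ≤ x := by
  obtain ⟨m, f, g, -, -, -, rfl⟩ := hx
  exact Finset.sum_nonneg fun j _ ↦ mul_nonneg (norm2_nonneg _) (norm2_nonneg _)

lemma mul_mem_wpSet {f g : MvP d} (hf : f.IsHomogeneous k) (hg : g.IsHomogeneous l) :
    norm2 f * norm2 g ∈ wpSet d k l (f * g) :=
  ⟨1, fun _ ↦ f, fun _ ↦ g, fun _ ↦ hf, fun _ ↦ hg, by simp, by simp⟩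

lemma add_mem_wpSet {p q : MvP d} {a b : ℝ} (ha : a ∈ wpSet d k l p) (hb : b ∈ wpSet d k l q) :
    a + b ∈ wpSet d k l (p + q) := by
  obtain ⟨m, f, g, hf, hg, rfl, rfl⟩ := ha
  obtain ⟨m', f', g', hf', hg', rfl, rfl⟩ := hb
  refine ⟨m + m', Fin.append f f', Fin.append g g', fun j ↦ ?_, fun j ↦ ?_,
    by simp [Fin.sum_univ_add], by simp [Fin.sum_univ_add]⟩
  · exact Fin.addCases (fun j ↦ by simpa using hf j) (fun j ↦ by simpa using hf' j) j
  · exact Fin.addCases (fun j ↦ by simpa using hg j) (fun j ↦ by simpa using hg' j) j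

lemma smul_mem_wpSet (c : ℂ) {p : MvP d} {a : ℝ} (ha : a ∈ wpSet d k l p) :
    ‖c‖ * a ∈ wpSet d k l (c • p) := by
  obtain ⟨m, f, g, hf, hg, rfl, rfl⟩ := ha
  refine ⟨m, fun j ↦ c • f j, g, fun j ↦ (hf j).smul c, hg, ?_, ?_⟩
  · simp [Finset.smul_sum]
  · simp [Finset.mul_sum, norm2_smul, mul_assoc]

lemma wpSet_nonempty {p : MvP d} (hp : p.IsHomogeneous (k + l)) : (wpSet d k l p).Nonempty := by
  have hmem : p ∈ homogeneousSubmodule (Fin d) ℂ k * homogeneousSubmodule (Fin d) ℂ l := by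
    rwa [← homogeneousSubmodule_add]
  exact Submodule.mul_induction_on hmem (fun f hf g hg ↦ ⟨_, mul_mem_wpSet hf hg⟩)
    fun p q ⟨a, ha⟩ ⟨b, hb⟩ ↦ ⟨a + b, add_mem_wpSet ha hb⟩

lemma wpNorm_le_of_mem {p : MvP d} {x : ℝ} (hx : x ∈ wpSet d k l p) : wpNorm d k l p ≤ x :=
  csInf_le ⟨0, fun _ ↦ nonneg_of_mem_wpSet⟩ hx

lemma wpNorm_nonneg (p : MvP d) : 0 ≤ wpNorm d k l p :=
  Real.sInf_nonneg fun _ ↦ nonneg_of_mem_wpSet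

@[simp] lemma wpNorm_zero : wpNorm d k l 0 = 0 :=
  (wpNorm_le_of_mem ⟨0, Fin.elim0, Fin.elim0, finZeroElim, finZeroElim, by simp, by simp⟩
    ).antisymm (wpNorm_nonneg 0)

lemma wpNorm_mul_le {f g : MvP d} (hf : f.IsHomogeneous k) (hg : g.IsHomogeneous l) :
    wpNorm d k l (f * g) ≤ norm2 f * norm2 g :=
  wpNorm_le_of_mem (mul_mem_wpSet hf hg)

lemma wpNorm_add_le {p q : MvP d} (hp : p.IsHomogeneous (k + l)) (hq : q.IsHomogeneous (k + l)) :
    wpNorm d k l (p + q) ≤ wpNorm d k l p + wpNorm d k l q :=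
  le_csInf_add_csInf (wpSet_nonempty hp) (wpSet_nonempty hq) fun _ ha _ hb ↦
    wpNorm_le_of_mem (add_mem_wpSet ha hb)

lemma wpNorm_smul_le (c : ℂ) {p : MvP d} (hp : p.IsHomogeneous (k + l)) :
    wpNorm d k l (c • p) ≤ ‖c‖ * wpNorm d k l p :=
  le_mul_csInf_of_forall_le (wpSet_nonempty hp) (norm_nonneg c) fun _ ha ↦
    wpNorm_le_of_mem (smul_mem_wpSet c ha)

def zwpSet (d k l : ℕ) (p : MvP d) : Set ℝ :=
  {x : ℝ | ∃ f : Fin d → MvP d,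
    (∀ i, (f i).IsHomogeneous (k + l)) ∧
    p = ∑ i, X i * f i ∧ x = ∑ i, wpNorm d k l (f i)}

lemma nonneg_of_mem_zwpSet {p : MvP d} {x : ℝ} (hx : x ∈ zwpSet d k l p) : 0 ≤ x := by
  obtain ⟨f, -, -, rfl⟩ := hx
  exact Finset.sum_nonneg fun i _ ↦ wpNorm_nonneg _

lemma zwpSet_nonempty {p : MvP d} (hp : p.IsHomogeneous (k + l + 1)) :
    (zwpSet d k l p).Nonempty := by
  have hmem :
      p ∈ homogeneousSubmodule (Fin d) ℂ (k + l) * homogeneousSubmodule (Fin d) ℂ 1 := by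
    rwa [← homogeneousSubmodule_add]
  refine Submodule.mul_induction_on hmem (fun f hf x hx ↦ ?_) ?_
  · rw [homogeneousSubmodule_one_eq_span_X, Submodule.mem_span_range_iff_exists_fun] at hx
    obtain ⟨c, rfl⟩ := hx
    exact ⟨_, fun i ↦ c i • f, fun i ↦ hf.smul (c i), by simp [Finset.mul_sum, mul_comm], rfl⟩
  · rintro p q ⟨_, a, ha, rfl, -⟩ ⟨_, b, hb, rfl, -⟩
    exact ⟨_, a + b, fun i ↦ (ha i).add (hb i), by simp [mul_add, Finset.sum_add_distrib], rfl⟩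

lemma zwpNorm_le_of_mem {p : MvP d} {x : ℝ} (hx : x ∈ zwpSet d k l p) : zwpNorm d k l p ≤ x :=
  csInf_le ⟨0, fun _ ↦ nonneg_of_mem_zwpSet⟩ hx

lemma zwpNorm_nonneg (p : MvP d) : 0 ≤ zwpNorm d k l p :=
  Real.sInf_nonneg fun _ ↦ nonneg_of_mem_zwpSet

@[simp] lemma zwpNorm_zero : zwpNorm d k l 0 = 0 :=
  (zwpNorm_le_of_mem ⟨0, fun _ ↦ isHomogeneous_zero _ _ _, by simp, by simp⟩).antisymm
    (zwpNorm_nonneg 0)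

lemma zwpNorm_X_mul_le {w : MvP d} (hw : w.IsHomogeneous (k + l)) (i : Fin d) :
    zwpNorm d k l (X i * w) ≤ wpNorm d k l w := by
  classical
  refine (zwpNorm_le_of_mem ⟨Pi.single i w, fun j ↦ ?_, ?_, rfl⟩).trans_eq ?_
  · rcases eq_or_ne j i with rfl | hj
    · simpa using hw
    · simpa [hj] using isHomogeneous_zero _ _ _
  · rw [Finset.sum_eq_single i (fun j _ hj ↦ by simp [hj]) (by simp), Pi.single_eq_same]
  · rw [Finset.sum_eq_single i (fun j _ hj ↦ by simp [hj]) (by simp), Pi.single_eq_same]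

lemma zwpNorm_add_le {p q : MvP d} (hp : p.IsHomogeneous (k + l + 1))
    (hq : q.IsHomogeneous (k + l + 1)) :
    zwpNorm d k l (p + q) ≤ zwpNorm d k l p + zwpNorm d k l q := by
  refine le_csInf_add_csInf (zwpSet_nonempty hp) (zwpSet_nonempty hq) ?_
  rintro _ ⟨f, hf, rfl, rfl⟩ _ ⟨g, hg, rfl, rfl⟩
  refine (zwpNorm_le_of_mem ⟨f + g, fun i ↦ (hf i).add (hg i), ?_, rfl⟩).trans ?_
  · simp [mul_add, Finset.sum_add_distrib]
  · rw [← Finset.sum_add_distrib]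
    exact Finset.sum_le_sum fun i _ ↦ wpNorm_add_le (hf i) (hg i)

lemma zwpNorm_smul_le (c : ℂ) {p : MvP d} (hp : p.IsHomogeneous (k + l + 1)) :
    zwpNorm d k l (c • p) ≤ ‖c‖ * zwpNorm d k l p := by
  refine le_mul_csInf_of_forall_le (zwpSet_nonempty hp) (norm_nonneg c) ?_
  rintro _ ⟨f, hf, rfl, rfl⟩
  refine (zwpNorm_le_of_mem ⟨c • f, fun i ↦ (hf i).smul c, ?_, rfl⟩).trans ?_
  · simp [Finset.smul_sum]
  · rw [Finset.mul_sum]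
    exact Finset.sum_le_sum fun i _ ↦ wpNorm_smul_le c (hf i)

def zwpSeminorm (d k l : ℕ) : Seminorm ℂ (MvP d) :=
  Seminorm.ofSMulLE (fun p ↦ zwpNorm d k l (homogeneousComponent (k + l + 1) p)) (by simp)
    (fun p q ↦ by
      simpa only [map_add] using zwpNorm_add_le (homogeneousComponent_isHomogeneous _ p)
        (homogeneousComponent_isHomogeneous _ q))
    fun c p ↦ by
      simpa only [map_smul] using zwpNorm_smul_le c (homogeneousComponent_isHomogeneous _ p)

lemma zwpSeminorm_apply {p : MvP d} (hp : p.IsHomogeneous (k + l + 1)) :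
    zwpSeminorm d k l p = zwpNorm d k l p := by
  change zwpNorm d k l (homogeneousComponent (k + l + 1) p) = _
  rw [homogeneousComponent_eq_self hp]

end WeakProduct

section Hankel

open Finset.HasAntidiagonal

variable {n k : ℕ}

lemma norm_coeff_X_mul_le (i : Fin d) (p : MvP d) (α : Fin d →₀ ℕ) :
    ‖(X i * p).coeff α‖ ≤ norm2 p := by
  classical
  rw [coeff_X_mul']
  split_ifs
  exacts [norm_coeff_le_norm2 _ _, by simpa using norm2_nonneg p]

lemma norm_coeff_mul_le {p r : MvP d} {a b : ℝ} (ha : ∀ β, ‖p.coeff β‖ ≤ a)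
    (hb : ∀ β, ‖r.coeff β‖ ≤ b) (α : Fin d →₀ ℕ) :
    ‖(p * r).coeff α‖ ≤ (antidiagonal α).card * (a * b) := by
  classical
  rw [coeff_mul, ← nsmul_eq_mul]
  refine (norm_sum_le _ _).trans (Finset.sum_le_card_nsmul _ _ _ fun x _ ↦ ?_)
  rw [norm_mul]
  exact mul_le_mul (ha _) (hb _) (norm_nonneg _) ((norm_nonneg _).trans (ha x.1))

def hanSet (d n k : ℕ) (q : MvP d) : Set ℝ :=
  {x : ℝ | ∃ (i : Fin d) (f g : MvP d), f.IsHomogeneous k ∧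
    g.IsHomogeneous (n - k - 1) ∧ norm2 f ≤ 1 ∧ norm2 g ≤ 1 ∧
    x = ‖pairing q (X i * hatp f * g)‖}

lemma zero_mem_hanSet [NeZero d] (q : MvP d) : 0 ∈ hanSet d n k q :=
  ⟨0, 0, 0, isHomogeneous_zero _ _ _, isHomogeneous_zero _ _ _, by simp, by simp,
    by simp [pairing]⟩

lemma hanSet_bddAbove (q : MvP d) : BddAbove (hanSet d n k q) := by
  classical
  refine ⟨∑ α ∈ q.support, ‖q.coeff α‖ * ((antidiagonal α).card * (1 * 1)), ?_⟩
  rintro _ ⟨i, f, g, -, -, hf, hg, rfl⟩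
  refine (norm_pairing_le _ _).trans <| Finset.sum_le_sum fun α _ ↦
    mul_le_mul_of_nonneg_left ?_ (norm_nonneg _)
  exact norm_coeff_mul_le (fun β ↦ (norm_coeff_X_mul_le i _ β).trans (by rwa [norm2_hatp]))
    (fun β ↦ (norm_coeff_le_norm2 g β).trans hg) α

lemma le_hanNorm'_of_mem {q : MvP d} {x : ℝ} (hx : x ∈ hanSet d n k q) : x ≤ hanNorm' d n k q :=
  le_csSup (hanSet_bddAbove q) hx

lemma hanNorm'_nonneg [NeZero d] (q : MvP d) : 0 ≤ hanNorm' d n k q :=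
  le_hanNorm'_of_mem (zero_mem_hanSet q)

lemma norm_pairing_X_mul_hatp_mul_le (q : MvP d) (i : Fin d) {f g : MvP d}
    (hf : f.IsHomogeneous k) (hg : g.IsHomogeneous (n - k - 1)) :
    ‖pairing (X i * hatp f * g) q‖ ≤ hanNorm' d n k q * (norm2 f * norm2 g) := by
  rcases eq_or_ne f 0 with rfl | hf0
  · simp [hatp]
  rcases eq_or_ne g 0 with rfl | hg0
  · simp
  obtain ⟨a, ha, hfa⟩ := exists_norm2_eq_one hf0
  obtain ⟨b, hb, hgb⟩ := exists_norm2_eq_one hg0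
  have hscale : X i * hatp f * g =
      ((norm2 f * norm2 g : ℝ) : ℂ) • (X i * hatp (a • f) * (b • g)) := by
    conv_lhs => rw [hfa, hgb]
    simp only [hatp_smul, map_mul, Complex.conj_ofReal, smul_mul_assoc, mul_smul_comm, smul_smul,
      Complex.ofReal_mul]
    ring_nf
  have hunit : ‖pairing (X i * hatp (a • f) * (b • g)) q‖ ≤ hanNorm' d n k q := by
    rw [norm_pairing_comm]
    exact le_hanNorm'_of_mem ⟨i, _, _, hf.smul a, hg.smul b, ha.le, hb.le, rfl⟩
  rw [hscale, pairing_smul_left, norm_mul, Complex.norm_real,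
    Real.norm_of_nonneg (mul_nonneg (norm2_nonneg f) (norm2_nonneg g)), mul_comm]
  exact mul_le_mul_of_nonneg_right hunit (mul_nonneg (norm2_nonneg f) (norm2_nonneg g))

lemma norm_pairing_X_mul_le [NeZero d] (q : MvP d) (i : Fin d) {w : MvP d}
    (hw : w.IsHomogeneous (k + (n - k - 1))) :
    ‖pairing (X i * w) q‖ ≤ hanNorm' d n k q * wpNorm d k (n - k - 1) w := by
  refine le_mul_csInf_of_forall_le (wpSet_nonempty hw) (hanNorm'_nonneg q) ?_
  rintro _ ⟨m, f, g, hf, hg, rfl, rfl⟩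
  rw [Finset.mul_sum, pairing_sum_left, Finset.mul_sum]
  refine (norm_sum_le _ _).trans <| Finset.sum_le_sum fun j _ ↦ ?_
  simpa [norm2_hatp, mul_assoc] using norm_pairing_X_mul_hatp_mul_le q i (hf j).hatp (hg j)

lemma norm_pairing_le_hanNorm'_mul_zwpNorm [NeZero d] (hk : k + 1 ≤ n) (q : MvP d) {h : MvP d}
    (hh : h.IsHomogeneous n) :
    ‖pairing h q‖ ≤ hanNorm' d n k q * zwpNorm d k (n - k - 1) h := by
  have hn : n = k + (n - k - 1) + 1 := by omega
  refine le_mul_csInf_of_forall_le (zwpSet_nonempty (hn ▸ hh)) (hanNorm'_nonneg q) ?_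
  rintro _ ⟨f, hf, rfl, rfl⟩
  rw [pairing_sum_left, Finset.mul_sum]
  exact (norm_sum_le _ _).trans <| Finset.sum_le_sum fun i _ ↦ norm_pairing_X_mul_le q i (hf i)

theorem hanNorm'_eq_sSup [NeZero d] (hk : k + 1 ≤ n) (q : MvP d) :
    hanNorm' d n k q = sSup {x : ℝ | ∃ h : MvP d, h.IsHomogeneous n ∧
      zwpNorm d k (n - k - 1) h ≤ 1 ∧ x = ‖pairing h q‖} := by
  set S := {x : ℝ | ∃ h : MvP d, h.IsHomogeneous n ∧
    zwpNorm d k (n - k - 1) h ≤ 1 ∧ x = ‖pairing h q‖}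
  have hS_le : ∀ x ∈ S, x ≤ hanNorm' d n k q := by
    rintro _ ⟨h, hh, hh1, rfl⟩
    exact (norm_pairing_le_hanNorm'_mul_zwpNorm hk q hh).trans
      (mul_le_of_le_one_right (hanNorm'_nonneg q) hh1)
  have hsub : hanSet d n k q ⊆ S := by
    rintro _ ⟨i, f, g, hf, hg, hf1, hg1, rfl⟩
    have hn : 1 + k + (n - k - 1) = n := by omega
    refine ⟨X i * hatp f * g, hn ▸ ((isHomogeneous_X ℂ i).mul hf.hatp).mul hg, ?_,
      norm_pairing_comm _ _⟩
    calc zwpNorm d k (n - k - 1) (X i * hatp f * g)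
        ≤ wpNorm d k (n - k - 1) (hatp f * g) := by
          rw [mul_assoc]; exact zwpNorm_X_mul_le (hf.hatp.mul hg) i
      _ ≤ norm2 f * norm2 g := by simpa [norm2_hatp] using wpNorm_mul_le hf.hatp hg
      _ ≤ 1 := mul_le_one₀ hf1 (norm2_nonneg g) hg1
  exact le_antisymm (csSup_le_csSup ⟨_, hS_le⟩ ⟨0, zero_mem_hanSet q⟩ hsub)
    (csSup_le ⟨0, hsub (zero_mem_hanSet q)⟩ hS_le)

lemma exists_isHomogeneous_forall_pairing_eq (ψ : Module.Dual ℂ (MvP d)) (n : ℕ) :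
    ∃ q : MvP d, q.IsHomogeneous n ∧ ∀ p : MvP d, p.IsHomogeneous n → pairing p q = ψ p := by
  classical
  let T := ((Finsupp.finite_of_degree_le (σ := Fin d) n).subset
    fun α (hα : α.degree = n) ↦ hα.le).toFinset
  have hT (α : Fin d →₀ ℕ) : α ∈ T ↔ α.degree = n := Set.Finite.mem_toFinset _
  refine ⟨∑ α ∈ T, monomial α (conj (ψ (monomial α 1))),
    IsHomogeneous.sum _ _ _ fun α hα ↦ isHomogeneous_monomial _ ((hT α).1 hα), fun p hp ↦ ?_⟩
  calc pairing p (∑ α ∈ T, monomial α (conj (ψ (monomial α 1))))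
      = ∑ α ∈ p.support, ψ (monomial α (p.coeff α)) := by
        refine Finset.sum_congr rfl fun α hα ↦ ?_
        have hαT : α ∈ T := (hT α).2 (hp.degree_eq_sum_deg_support hα).symm
        rw [coeff_sum, Finset.sum_eq_single α (fun β _ hβ ↦ by simp [coeff_monomial, hβ])
          (absurd hαT), coeff_monomial, if_pos rfl, Complex.conj_conj,
          ← smul_eq_mul, ← map_smul, smul_monomial, smul_eq_mul, mul_one]
    _ = ψ p := by rw [← map_sum, support_sum_monomial_coeff]

theorem zwpNorm_eq_sSup [NeZero d] (hk : k + 1 ≤ n) {h : MvP d} (hh : h.IsHomogeneous n) :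
    zwpNorm d k (n - k - 1) h = sSup {x : ℝ | ∃ q : MvP d, q.IsHomogeneous n ∧
      hanNorm' d n k q ≤ 1 ∧ x = ‖pairing h q‖} := by
  have hn : n = k + (n - k - 1) + 1 := by omega
  obtain ⟨φ, hφh, hφ⟩ := (zwpSeminorm d k (n - k - 1)).exists_dual_eq_le h
  obtain ⟨q, hq, hpair⟩ := exists_isHomogeneous_forall_pairing_eq φ n
  have hq_le (p : MvP d) (hp : p.IsHomogeneous n) :
      ‖pairing p q‖ ≤ zwpNorm d k (n - k - 1) p := by
    rw [hpair p hp, ← zwpSeminorm_apply (hn ▸ hp)]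
    exact hφ p
  have hq1 : hanNorm' d n k q ≤ 1 := by
    rw [hanNorm'_eq_sSup hk]
    refine csSup_le ⟨0, 0, isHomogeneous_zero _ _ _, by simp, by simp⟩ ?_
    rintro _ ⟨p, hp, hp1, rfl⟩
    exact (hq_le p hp).trans hp1
  symm
  refine IsGreatest.csSup_eq ⟨⟨q, hq, hq1, ?_⟩, ?_⟩
  · rw [hpair h hh, hφh, zwpSeminorm_apply (hn ▸ hh), RCLike.norm_ofReal,
      abs_of_nonneg (zwpNorm_nonneg h)]
  · rintro _ ⟨q', -, hq'1, rfl⟩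
    exact (norm_pairing_le_hanNorm'_mul_zwpNorm hk q' hh).trans
      (mul_le_of_le_one_left (zwpNorm_nonneg h) hq'1)

end Hankel

end

/-- Lemma 2.1 (2): duality of `‖·‖'_{Han_k}` and `‖·‖_{Z_d ⊙ P_{d,k} ⊙ P_{d,n-k-1}}`
on `P_{d,n}` with respect to the Cauchy pairing. -/
theorem hankel'_zWeakProduct_duality (d n k : ℕ) (hd : 1 ≤ d) (hk : k + 1 ≤ n) :
    (∀ q : MvP d, q.IsHomogeneous n →
      hanNorm' d n k q =
        sSup {x : ℝ | ∃ h : MvP d, h.IsHomogeneous n ∧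
          zwpNorm d k (n - k - 1) h ≤ 1 ∧ x = ‖pairing h q‖}) ∧
    (∀ h : MvP d, h.IsHomogeneous n →
      zwpNorm d k (n - k - 1) h =
        sSup {x : ℝ | ∃ q : MvP d, q.IsHomogeneous n ∧
          hanNorm' d n k q ≤ 1 ∧ x = ‖pairing h q‖}) := by
  have : NeZero d := ⟨by omega⟩
  exact ⟨fun q _ ↦ hanNorm'_eq_sSup hk q, fun _ hh ↦ zwpNorm_eq_sSup hk hh⟩

end WP
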